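/- arXiv:2605.21727 — 2 statements merged into one kernel-verified Lean document; each statement's English description precedes it below -/
import Mathlib

section
/- For all integers 2 ≤ s ≤ m, the minimum size of a label set for M(s,m) satisfies the lower bound L_min(s,m) ≥ 2^{s−2} · (1 + ⌈log₂(m−s+2)⌉). -/
/-- The recursively constructed mask set `M(s, m)`, viewed as a set of vectors of
length `2^m` indexed by the points of `𝔽₂^m` (i.e. functions `(Fin m → ZMod 2) → ZMod 2`).
For a point `p : Fin (m+1) → ZMod 2`, the coordinate `p 0` selects the half
(left half for `p 0 = 0`) and `Fin.tail p` the position inside that half, so that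
the concatenation `[x, y]` corresponds to
`fun p => if p 0 = 0 then x (Fin.tail p) else y (Fin.tail p)`. -/
def maskSet : (m : ℕ) → ℕ → Set ((Fin m → ZMod 2) → ZMod 2)
  | 0, _ => Set.univ
  | m + 1, s =>
    if s ≤ 1 then {fun _ => 0, fun _ => 1}
    else if m + 1 ≤ Nat.clog 2 s then Set.univ
    else
      ((fun g : (Fin m → ZMod 2) → ZMod 2 => fun p => g (Fin.tail p)) '' maskSet m s) ∪
        ⋃ i ∈ Finset.Ico 1 s,
          {f | ∃ x ∈ maskSet m i, ∃ y ∈ maskSet m (s - i),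
            f = fun p => if p 0 = 0 then x (Fin.tail p) else y (Fin.tail p)}

/-- A finite set `L` of coordinate positions is a label set for (distinguishes) `S`
if distinct vectors of `S` have distinct restrictions to `L`. -/
def Distinguishes {ι : Type*} (L : Finset ι) (S : Set (ι → ZMod 2)) : Prop :=
  ∀ x ∈ S, ∀ y ∈ S, (∀ i ∈ L, x i = y i) → x = y

/-- `L_min(s, m)`: the minimum cardinality of a label set for `M(s, m)`. -/
noncomputable def Lmin (s m : ℕ) : ℕ :=
  sInf {k | ∃ L : Finset (Fin m → ZMod 2), L.card = k ∧ Distinguishes L (maskSet m s)}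

lemma zmod2_cases (a : ZMod 2) : a = 0 ∨ a = 1 := by revert a; decide

lemma clog_two_le (s : ℕ) : Nat.clog 2 s ≤ s - 1 := by
  rcases Nat.eq_zero_or_pos s with h | h
  · simp [h]
  rw [Nat.clog_le_iff_le_pow one_lt_two]
  calc s = (s-1)+1 := by omega
  _ ≤ 2^(s-1) := Nat.lt_two_pow_self

lemma const_mem_one (m : ℕ) (a : ZMod 2) : (fun _ => a) ∈ maskSet m 1 := by
  cases m with
  | zero => trivial
  | succ m =>
    show _ ∈ if (1:ℕ) ≤ 1 then _ else _
    rw [if_pos le_rfl]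
    rcases zmod2_cases a with h | h <;> subst h
    · exact Set.mem_insert _ _
    · exact Set.mem_insert_of_mem _ rfl

lemma linear_mem_two (m : ℕ) (a : ZMod 2) (k : Fin m) :
    (fun p => a + p k) ∈ maskSet m 2 := by
  induction m with
  | zero => exact k.elim0
  | succ m ih =>
    show _ ∈ maskSet (m+1) 2
    rcases Nat.lt_or_ge m 1 with hm | hm
    · interval_cases m
      · rw [maskSet, if_neg (by norm_num), if_pos]
        · trivial
        · have : 0 < Nat.clog 2 2 := (Nat.lt_clog_iff_pow_lt one_lt_two).2 (by norm_num)
          omega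
    · rw [maskSet, if_neg (by norm_num), if_neg (by
        have h := Nat.pow_pred_clog_lt_self one_lt_two (x := 2) one_lt_two
        intro hc
        have : (2:ℕ)^((Nat.clog 2 2).pred) < 2 := h
        -- clog 2 2 ≤ 1
        have h1 : Nat.clog 2 2 ≤ 1 := by
          rw [Nat.clog_le_iff_le_pow one_lt_two]; norm_num
        omega)]
      rcases Fin.eq_zero_or_eq_succ k with hk | ⟨j, hk⟩
      · subst hk
        refine Set.mem_union_right _ ?_
        refine Set.mem_iUnion.2 ⟨1, Set.mem_iUnion.2 ⟨?_, ?_⟩⟩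
        · simp
        · refine ⟨fun _ => a, const_mem_one m a, fun _ => a + 1, const_mem_one m (a+1), ?_⟩
          funext p
          rcases zmod2_cases (p 0) with h | h <;> simp [h]
      · subst hk
        refine Set.mem_union_left _ ⟨fun q => a + q j, ih j, ?_⟩
        funext p
        simp [Fin.tail]

lemma base_card (m : ℕ) (hm : 2 ≤ m) (L : Finset (Fin m → ZMod 2))
    (hL : Distinguishes L (maskSet m 2)) : 1 + Nat.clog 2 m ≤ L.card := by
  classical
  -- counting: the 2m functions p ↦ a + p k are distinguished by L
  set F : ZMod 2 × Fin m → ((Fin m → ZMod 2) → ZMod 2) := fun z => fun p => z.1 + p z.2 with hF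
  have hFmem : ∀ z, F z ∈ maskSet m 2 := fun z => linear_mem_two m z.1 z.2
  have hFinj : Function.Injective F := by
    rintro ⟨a, k⟩ ⟨b, j⟩ h
    have h0 := congrFun h (fun _ => 0)
    simp [hF] at h0
    subst h0
    have hkj : k = j := by
      by_contra hne
      have h1 := congrFun h (fun i => if i = k then 1 else 0)
      simp [hF, if_neg (Ne.symm hne)] at h1
    subst hkj; rfl
  have hGinj : Function.Injective (fun z : ZMod 2 × Fin m => (fun i : ↥L => F z i.1)) := by
    intro z z' h
    refine hFinj (hL _ (hFmem z) _ (hFmem z') ?_)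
    intro i hi
    exact congrFun h ⟨i, hi⟩
  have hcard : 2 * m ≤ 2 ^ L.card := by
    have := Fintype.card_le_of_injective _ hGinj
    simpa [Fintype.card_fun] using this
  by_contra hc
  push_neg at hc
  have h1 : 1 ≤ Nat.clog 2 m := (Nat.lt_clog_iff_pow_lt one_lt_two).2 (by simp; omega)
  have h2 : 2 ^ (Nat.clog 2 m - 1) < m := by
    have := Nat.pow_pred_clog_lt_self one_lt_two (x := m) hm
    simpa [Nat.pred_eq_sub_one] using this
  have h3 : 2 ^ Nat.clog 2 m = 2 * 2 ^ (Nat.clog 2 m - 1) := by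
    rw [← pow_succ']
    congr 1
    omega
  have h4 : 2 ^ L.card ≤ 2 ^ Nat.clog 2 m := Nat.pow_le_pow_right (by norm_num) (by omega)
  omega

lemma lmin_exists (s m : ℕ) :
    ∃ L : Finset (Fin m → ZMod 2), L.card = Lmin s m ∧ Distinguishes L (maskSet m s) := by
  have hne : {k | ∃ L : Finset (Fin m → ZMod 2), L.card = k ∧ Distinguishes L (maskSet m s)}.Nonempty := by
    refine ⟨(Finset.univ).card, Finset.univ, rfl, ?_⟩
    intro x _ y _ h
    funext i
    exact h i (Finset.mem_univ i)
  obtain ⟨L, hL1, hL2⟩ := Nat.sInf_mem hne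
  exact ⟨L, hL1, hL2⟩

lemma lmin_le (s m : ℕ) (L : Finset (Fin m → ZMod 2)) (h : Distinguishes L (maskSet m s)) :
    Lmin s m ≤ L.card :=
  Nat.sInf_le ⟨L, rfl, h⟩

lemma lmin_two (m : ℕ) (hm : 2 ≤ m) : 1 + Nat.clog 2 m ≤ Lmin 2 m := by
  obtain ⟨L, hL1, hL2⟩ := lmin_exists 2 m
  rw [← hL1]
  exact base_card m hm L hL2

lemma maskSet_pair_mem (m s i : ℕ) (h1 : 1 ≤ i) (h2 : i < s) (hs : 2 ≤ s)
    (hc : Nat.clog 2 s < m + 1)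
    (x : (Fin m → ZMod 2) → ZMod 2) (hx : x ∈ maskSet m i)
    (y : (Fin m → ZMod 2) → ZMod 2) (hy : y ∈ maskSet m (s - i)) :
    (fun p => if p 0 = 0 then x (Fin.tail p) else y (Fin.tail p)) ∈ maskSet (m+1) s := by
  rw [maskSet, if_neg (by omega), if_neg (by omega)]
  refine Set.mem_union_right _ ?_
  refine Set.mem_iUnion.2 ⟨i, Set.mem_iUnion.2 ⟨Finset.mem_Ico.2 ⟨h1, h2⟩, ?_⟩⟩
  exact ⟨x, hx, y, hy, rfl⟩

lemma lmin_step (s m : ℕ) (hs : 2 ≤ s) (hm : s ≤ m) :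
    2 * Lmin s m ≤ Lmin (s+1) (m+1) := by
  classical
  obtain ⟨L, hL1, hL2⟩ := lmin_exists (s+1) (m+1)
  have hc : Nat.clog 2 (s+1) < m + 1 := by
    have := clog_two_le (s+1)
    omega
  set L0 := L.filter (fun p => p 0 = 0) with hL0
  set L1 := L.filter (fun p => ¬ p 0 = 0) with hL1d
  set A := L0.image Fin.tail with hA
  set B := L1.image Fin.tail with hB
  have hdistA : Distinguishes A (maskSet m s) := by
    intro x hx y hy hagree
    set X := fun p : Fin (m+1) → ZMod 2 => if p 0 = 0 then x (Fin.tail p) else (0:ZMod 2) with hX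
    set Y := fun p : Fin (m+1) → ZMod 2 => if p 0 = 0 then y (Fin.tail p) else (0:ZMod 2) with hY
    have hXm : X ∈ maskSet (m+1) (s+1) := by
      have := maskSet_pair_mem m (s+1) s (by omega) (by omega) (by omega) hc x hx
        (fun _ => 0) (by simpa using const_mem_one m 0)
      simpa using this
    have hYm : Y ∈ maskSet (m+1) (s+1) := by
      have := maskSet_pair_mem m (s+1) s (by omega) (by omega) (by omega) hc y hy
        (fun _ => 0) (by simpa using const_mem_one m 0)
      simpa using this
    have hXY : X = Y := by
      refine hL2 X hXm Y hYm ?_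
      intro p hp
      by_cases h0 : p 0 = 0
      · have hpA : Fin.tail p ∈ A := Finset.mem_image_of_mem _ (Finset.mem_filter.2 ⟨hp, h0⟩)
        simp [hX, hY, h0, hagree _ hpA]
      · simp [hX, hY, h0]
    funext q
    have := congrFun hXY (Fin.cons 0 q)
    simpa [hX, hY, Fin.tail_cons] using this
  have hdistB : Distinguishes B (maskSet m s) := by
    intro x hx y hy hagree
    set X := fun p : Fin (m+1) → ZMod 2 => if p 0 = 0 then (0:ZMod 2) else x (Fin.tail p) with hX
    set Y := fun p : Fin (m+1) → ZMod 2 => if p 0 = 0 then (0:ZMod 2) else y (Fin.tail p) with hY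
    have hXm : X ∈ maskSet (m+1) (s+1) := by
      have := maskSet_pair_mem m (s+1) 1 (by omega) (by omega) (by omega) hc
        (fun _ => 0) (by simpa using const_mem_one m 0) x (by simpa using hx)
      simpa using this
    have hYm : Y ∈ maskSet (m+1) (s+1) := by
      have := maskSet_pair_mem m (s+1) 1 (by omega) (by omega) (by omega) hc
        (fun _ => 0) (by simpa using const_mem_one m 0) y (by simpa using hy)
      simpa using this
    have hXY : X = Y := by
      refine hL2 X hXm Y hYm ?_
      intro p hp
      by_cases h0 : p 0 = 0
      · simp [hX, hY, h0]
      · have hpB : Fin.tail p ∈ B := Finset.mem_image_of_mem _ (Finset.mem_filter.2 ⟨hp, h0⟩)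
        simp [hX, hY, h0, hagree _ hpB]
    funext q
    have := congrFun hXY (Fin.cons 1 q)
    simpa [hX, hY, Fin.tail_cons] using this
  have h1 : Lmin s m ≤ A.card := lmin_le s m A hdistA
  have h2 : Lmin s m ≤ B.card := lmin_le s m B hdistB
  have h3 : A.card ≤ L0.card := Finset.card_image_le
  have h4 : B.card ≤ L1.card := Finset.card_image_le
  have h5 : L0.card + L1.card = L.card :=
    Finset.card_filter_add_card_filter_not _
  omega

/-- Lower bound on the minimum label size:
`L_min(s,m) ≥ 2^(s-2) * (1 + ⌈log₂ (m - s + 2)⌉)`. -/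
theorem Lmin_lower (s m : ℕ) (hs : 2 ≤ s) (hsm : s ≤ m) :
    2 ^ (s - 2) * (1 + Nat.clog 2 (m - s + 2)) ≤ Lmin s m := by
  induction s, hs using Nat.le_induction generalizing m with
  | base =>
    have h : m - 2 + 2 = m := by omega
    simpa [h] using lmin_two m hsm
  | succ s hs ih =>
    obtain ⟨m', rfl⟩ : ∃ m', m = m' + 1 := ⟨m - 1, by omega⟩
    have hm' : s ≤ m' := by omega
    have ihm := ih m' hm'
    have step := lmin_step s m' hs hm'
    have e1 : s + 1 - 2 = s - 2 + 1 := by omega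
    have e2 : m' + 1 - (s + 1) = m' - s := by omega
    calc 2 ^ (s + 1 - 2) * (1 + Nat.clog 2 (m' + 1 - (s + 1) + 2))
        = 2 * (2 ^ (s - 2) * (1 + Nat.clog 2 (m' - s + 2))) := by
          rw [e1, e2, pow_succ]; ring
      _ ≤ 2 * Lmin s m' := Nat.mul_le_mul_left 2 ihm
      _ ≤ Lmin (s + 1) (m' + 1) := step
end

section
/- For every integer m ≥ 1, the minimum size of a label set for M(2,m) equals 1 + ⌈log₂(m+1)⌉: there exists a set of 1 + ⌈log₂(m+1)⌉ coordinate positions on which distinct masks of M(2,m) have distinct restrictions, and no smaller set of positions distinguishes all masks of M(2,m). -/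
lemma zmod2 (x : ZMod 2) : x = 0 ∨ x = 1 := by revert x; decide

lemma maskSet_one (m : ℕ) (hm : 1 ≤ m) :
    maskSet m 1 = {fun _ => 0, fun _ => 1} := by
  cases m with
  | zero => omega
  | succ m' => simp [maskSet]

lemma maskSet_two (m : ℕ) (hm : 1 ≤ m) :
    maskSet m 2 = {f | (∃ c, f = fun _ => c) ∨ ∃ k c, f = fun p => p k + c} := by
  induction m, hm using Nat.le_induction with
  | base =>
    have h1 : maskSet 1 2 = Set.univ := by simp [maskSet, Nat.clog]
    rw [h1]
    ext f
    simp only [Set.mem_univ, Set.mem_setOf_eq, true_iff]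
    have hp : ∀ p : Fin 1 → ZMod 2, p = fun _ => p 0 := by
      intro p; funext i; rw [Subsingleton.elim i 0]
    rcases zmod2 (f (fun _ => 0)) with h0 | h0 <;> rcases zmod2 (f (fun _ => 1)) with h1 | h1
    · left; exact ⟨0, by funext p; rw [hp p]; rcases zmod2 (p 0) with h|h <;> rw [h] <;> assumption⟩
    · right; refine ⟨0, 0, ?_⟩
      funext p; rw [hp p]; rcases zmod2 (p 0) with h|h <;> rw [h] <;> simp [h0, h1]
    · right; refine ⟨0, 1, ?_⟩
      funext p; rw [hp p]; rcases zmod2 (p 0) with h|h <;> rw [h] <;> simp [h0, h1] <;> decide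
    · left; exact ⟨1, by funext p; rw [hp p]; rcases zmod2 (p 0) with h|h <;> rw [h] <;> assumption⟩
  | succ m hm ih =>
    have hexp : maskSet (m + 1) 2 =
        ((fun g : (Fin m → ZMod 2) → ZMod 2 => fun p => g (Fin.tail p)) '' maskSet m 2) ∪
        ⋃ i ∈ Finset.Ico 1 2,
          {f | ∃ x ∈ maskSet m i, ∃ y ∈ maskSet m (2 - i),
            f = fun p => if p 0 = 0 then x (Fin.tail p) else y (Fin.tail p)} := by
      rw [maskSet]
      rw [if_neg (by norm_num), if_neg (by have := Nat.clog_pow 2 1 (by norm_num); rw [pow_one] at this; omega)]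
    have hIco : Finset.Ico 1 2 = {1} := rfl
    rw [hexp, hIco]
    simp only [Finset.mem_singleton, Set.iUnion_iUnion_eq_left, maskSet_one m hm, ih]
    ext f
    constructor
    · rintro (⟨g, hg, rfl⟩ | hf)
      · rcases hg with ⟨c, rfl⟩ | ⟨k, c, rfl⟩
        · exact Or.inl ⟨c, rfl⟩
        · exact Or.inr ⟨k.succ, c, rfl⟩
      · simp only [Set.mem_setOf_eq, Set.mem_insert_iff, Set.mem_singleton_iff] at hf
        obtain ⟨x, hx, y, hy, rfl⟩ := hf
        rcases hx with rfl | rfl <;> rcases hy with rfl | rfl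
        · exact Or.inl ⟨0, by funext p; split <;> rfl⟩
        · refine Or.inr ⟨0, 0, ?_⟩
          funext p; rcases zmod2 (p 0) with h|h <;> simp [h]
        · refine Or.inr ⟨0, 1, ?_⟩
          funext p; rcases zmod2 (p 0) with h|h <;> simp [h] <;> decide
        · exact Or.inl ⟨1, by funext p; split <;> rfl⟩
    · rintro (⟨c, rfl⟩ | ⟨k, c, rfl⟩)
      · exact Or.inl ⟨fun _ => c, Or.inl ⟨c, rfl⟩, rfl⟩
      · -- case on k
        rcases Fin.eq_zero_or_eq_succ k with rfl | ⟨j, rfl⟩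
        · refine Or.inr ?_
          simp only [Set.mem_setOf_eq, Set.mem_insert_iff, Set.mem_singleton_iff]
          rcases zmod2 c with rfl | rfl
          · refine ⟨fun _ => 0, Or.inl rfl, fun _ => 1, Or.inr rfl, ?_⟩
            funext p; rcases zmod2 (p 0) with h|h <;> simp [h]
          · refine ⟨fun _ => 1, Or.inr rfl, fun _ => 0, Or.inl rfl, ?_⟩
            funext p; rcases zmod2 (p 0) with h|h <;> simp [h] <;> decide
        · exact Or.inl ⟨fun q => q j + c, Or.inr ⟨j, c, rfl⟩, rfl⟩

lemma lower_bound (m : ℕ) (hm : 1 ≤ m) (T : Finset (Fin m → ZMod 2))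
    (hT : Distinguishes T (maskSet m 2)) : 1 + Nat.clog 2 (m + 1) ≤ T.card := by
  classical
  set φ : ZMod 2 ⊕ (Fin m × ZMod 2) → ((Fin m → ZMod 2) → ZMod 2) :=
    Sum.elim (fun c => fun _ => c) (fun kc => fun p => p kc.1 + kc.2) with hφ
  have hmem : ∀ i, φ i ∈ maskSet m 2 := by
    intro i; rw [maskSet_two m hm]
    rcases i with c | ⟨k, c⟩
    · exact Or.inl ⟨c, rfl⟩
    · exact Or.inr ⟨k, c, rfl⟩
  have hinjφ : Function.Injective φ := by
    have key : ∀ (k : Fin m) (a b : ZMod 2),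
        (fun _ : Fin m → ZMod 2 => a) ≠ fun p => p k + b := by
      intro k a b h
      have h0 := congrFun h (fun _ => 0)
      have h1 := congrFun h (fun i => if i = k then 1 else 0)
      simp at h0 h1
      rw [h0] at h1
      revert h1; rcases zmod2 b with rfl | rfl <;> decide
    rintro (a | ⟨k, a⟩) (b | ⟨k', b⟩) h
    · have := congrFun h (fun _ => 0); simpa [hφ] using this
    · exact absurd h (key k' a b)
    · exact absurd h.symm (key k b a)
    · have h0 := congrFun h (fun _ => 0)
      simp [hφ] at h0
      subst h0
      by_cases hk : k = k'
      · subst hk; rfl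
      · exfalso
        have h1 := congrFun h (fun i => if i = k then 1 else 0)
        simp only [hφ, Sum.elim_inr] at h1
        rw [if_pos trivial, if_neg (fun h' : k' = k => hk h'.symm)] at h1
        revert h1; rcases zmod2 a with rfl | rfl <;> decide
  have hinj : Function.Injective (fun i => fun p : {x // x ∈ T} => φ i p.1) := by
    intro i j h
    exact hinjφ (hT _ (hmem i) _ (hmem j) (fun p hp => congrFun h ⟨p, hp⟩))
  have hcard := Fintype.card_le_of_injective _ hinj
  rw [Fintype.card_fun] at hcard
  simp [Fintype.card_coe] at hcard
  -- hcard : 2 + m * 2 ≤ 2 ^ T.card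
  have ht1 : 1 ≤ T.card := by
    by_contra h
    push_neg at h
    interval_cases h' : T.card <;> omega
  have h2 : m + 1 ≤ 2 ^ (T.card - 1) := by
    have : 2 ^ T.card = 2 * 2 ^ (T.card - 1) := by
      rw [← pow_succ']
      congr 1
      omega
    omega
  have := (Nat.clog_le_iff_le_pow (by norm_num)).mpr h2
  omega

lemma upper_bound (m : ℕ) (hm : 1 ≤ m) :
    ∃ T : Finset (Fin m → ZMod 2), T.card ≤ 1 + Nat.clog 2 (m + 1) ∧
      Distinguishes T (maskSet m 2) := by
  classical
  set c := Nat.clog 2 (m + 1) with hc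
  have hcards : m ≤ Fintype.card {v : Fin c → ZMod 2 // v ≠ 0} := by
    have h1 : m + 1 ≤ 2 ^ c := Nat.le_pow_clog (by norm_num) _
    have h2 : Fintype.card {v : Fin c → ZMod 2 // v ≠ 0} = 2 ^ c - 1 := by
      simp only [Ne]
      rw [Fintype.card_subtype_compl, Fintype.card_subtype_eq, Fintype.card_fun]
      simp
    omega
  obtain ⟨e⟩ : Nonempty (Fin m ↪ {v : Fin c → ZMod 2 // v ≠ 0}) :=
    Function.Embedding.nonempty_iff_card_le.2 (by simpa using hcards)
  refine ⟨insert 0 (Finset.image (fun j : Fin c => (fun k : Fin m => (e k).1 j)) Finset.univ),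
    ?_, ?_⟩
  · calc _ ≤ (Finset.image (fun j : Fin c => (fun k : Fin m => (e k).1 j)) Finset.univ).card + 1 :=
        Finset.card_insert_le _ _
      _ ≤ c + 1 := by
        have := Finset.card_image_le (s := (Finset.univ : Finset (Fin c)))
          (f := fun j : Fin c => (fun k : Fin m => (e k).1 j))
        simpa using this
      _ = 1 + c := by omega
  · intro f hf g hg hagree
    rw [maskSet_two m hm] at hf hg
    have h0 : (0 : Fin m → ZMod 2) ∈
        insert 0 (Finset.image (fun j : Fin c => (fun k : Fin m => (e k).1 j)) Finset.univ) :=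
      Finset.mem_insert_self _ _
    have hpj : ∀ j : Fin c, (fun k : Fin m => (e k).1 j) ∈
        insert 0 (Finset.image (fun j : Fin c => (fun k : Fin m => (e k).1 j)) Finset.univ) := by
      intro j
      exact Finset.mem_insert_of_mem (Finset.mem_image_of_mem _ (Finset.mem_univ j))
    have key : ∀ (k : Fin m) (a b : ZMod 2),
        (∀ i ∈ insert 0 (Finset.image (fun j : Fin c => (fun k : Fin m => (e k).1 j))
          Finset.univ), a = i k + b) → False := by
      intro k a b hag
      have ha0 := hag 0 h0
      simp at ha0
      obtain ⟨j, hj⟩ : ∃ j, (e k).1 j ≠ 0 := by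
        by_contra h
        push_neg at h
        exact (e k).2 (funext h)
      have haj := hag _ (hpj j)
      rcases zmod2 ((e k).1 j) with h1 | h1
      · exact hj h1
      rw [h1, ha0] at haj
      revert haj; rcases zmod2 b with rfl | rfl <;> decide
    rcases hf with ⟨a, rfl⟩ | ⟨k, a, rfl⟩ <;> rcases hg with ⟨b, rfl⟩ | ⟨k', b, rfl⟩
    · have := hagree 0 h0; simp at this; rw [this]
    · exact absurd (key k' a b (fun i hi => hagree i hi)) (by simp)
    · exact absurd (key k b a (fun i hi => (hagree i hi).symm)) (by simp)
    · have ha0 := hagree 0 h0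
      simp at ha0
      subst ha0
      by_cases hk : k = k'
      · subst hk; rfl
      · exfalso
        have hne : (e k).1 ≠ (e k').1 := fun h => hk (e.injective (Subtype.ext h))
        obtain ⟨j, hj⟩ : ∃ j, (e k).1 j ≠ (e k').1 j := by
          by_contra h
          push_neg at h
          exact hne (funext h)
        have haj := hagree _ (hpj j)
        simp at haj
        exact hj haj

/-- The minimum label size for `M(2,m)` equals `1 + ⌈log₂ (m+1)⌉`: there is a set of
`1 + ⌈log₂ (m+1)⌉` positions distinguishing all masks of `M(2,m)`, and no smaller
set of positions does. -/
theorem Lmin_two (m : ℕ) (hm : 1 ≤ m) :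
    (∃ T : Finset (Fin m → ZMod 2), T.card = 1 + Nat.clog 2 (m + 1) ∧
      Distinguishes T (maskSet m 2)) ∧
    ∀ T : Finset (Fin m → ZMod 2), Distinguishes T (maskSet m 2) →
      1 + Nat.clog 2 (m + 1) ≤ T.card := by
  refine ⟨?_, fun T hT => lower_bound m hm T hT⟩
  obtain ⟨T, hcard, hdist⟩ := upper_bound m hm
  exact ⟨T, le_antisymm hcard (lower_bound m hm T hdist), hdist⟩
end
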